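/- arXiv:2206.09331 — 2 statements merged into one kernel-verified Lean document; each statement's English description precedes it below -/
import Mathlib

section
/- Let d, n ≥ 1, M ≥ 0, σ ≥ 0 and R > 0. Let V : ℝ^d × ℝ^d → M_n(ℂ) and V⁰ : ℝ^d → M_n(ℂ) be measurable, with Frobenius norms |V(x,ξ)| ≤ M and |V⁰(x)| ≤ M for all x, ξ, and suppose |V(x,ξ) − V⁰(x)| ≤ σ whenever |ξ| ≥ R. Then there exists a constant C > 0, depending only on d, such that for every ε > 0, every η > 0 and every γ ∈ ℤ^d: | η^{−d} ∫_{□_γ^η} ( V(x, x/ε) − V⁰(x) ) dx | ≤ σ + C M min(1, (εR/η)^d). -/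
/-!
Split the cell at the ball `|x| < εR`. Outside it `|x/ε| ≥ R`, so the integrand has Frobenius
norm at most `σ`; inside it the norm is at most `2M`, and the ball lies in a cube of side `2εR`,
so its intersection with the cell has measure at most
`min(η^d, (2εR)^d) ≤ 2^d η^d min(1, (εR/η)^d)`. Hence `C = 2^(d+1)` works.
-/

open MeasureTheory

noncomputable section

/-- `ℝ^d` with its Euclidean structure. -/
abbrev Ed (d : ℕ) := EuclideanSpace ℝ (Fin d)

/-- The cell `□_γ^η = η•γ + [0,η]^d` of the rescaled lattice `ηℤ^d`. -/
def cell (d : ℕ) (η : ℝ) (γ : Fin d → ℤ) : Set (Ed d) :=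
  {x | ∀ i, η * γ i ≤ x i ∧ x i ≤ η * γ i + η}

/-- Frobenius norm of a complex `n × n` matrix. -/
def frob {n : ℕ} (A : Matrix (Fin n) (Fin n) ℂ) : ℝ :=
  Real.sqrt (∑ i, ∑ k, ‖A i k‖ ^ 2)

def entryVec {n : ℕ} (A : Matrix (Fin n) (Fin n) ℂ) : EuclideanSpace ℂ (Fin n × Fin n) :=
  WithLp.toLp 2 fun pq => A pq.1 pq.2

lemma frob_eq_norm_entryVec {n : ℕ} (A : Matrix (Fin n) (Fin n) ℂ) :
    frob A = ‖entryVec A‖ := by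
  rw [EuclideanSpace.norm_eq, frob, Fintype.sum_prod_type]
  rfl

lemma frob_sub_le {n : ℕ} (A B : Matrix (Fin n) (Fin n) ℂ) : frob (A - B) ≤ frob A + frob B := by
  simp only [frob_eq_norm_entryVec]
  exact norm_sub_le (entryVec A) (entryVec B)

lemma stronglyMeasurable_entryVec {α : Type*} [MeasurableSpace α] {n : ℕ}
    {F : α → Matrix (Fin n) (Fin n) ℂ} (hF : ∀ p q, Measurable fun x => F x p q) :
    StronglyMeasurable fun x => entryVec (F x) :=
  (PiLp.continuousLinearEquiv 2 ℂ _).symm.continuous.comp_stronglyMeasurable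
    (measurable_pi_lambda _ fun pq : Fin n × Fin n => hF pq.1 pq.2).stronglyMeasurable

lemma frob_const_mul_integral {α : Type*} [MeasurableSpace α] {μ : Measure α} {n : ℕ}
    (c : ℂ) {F : α → Matrix (Fin n) (Fin n) ℂ} (hF : Integrable (fun x => entryVec (F x)) μ) :
    frob (fun p q => c * ∫ x, F x p q ∂μ) = ‖c‖ * ‖∫ x, entryVec (F x) ∂μ‖ := by
  have hentries : entryVec (fun p q => c * ∫ x, F x p q ∂μ) = c • ∫ x, entryVec (F x) ∂μ := by
    ext pq
    exact congrArg (c * ·) ((EuclideanSpace.proj pq).integral_comp_comm hF)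
  rw [(frob_eq_norm_entryVec _).trans (congrArg norm hentries), norm_smul]

theorem norm_setIntegral_le_of_norm_le_off {α E : Type*} [MeasurableSpace α]
    [NormedAddCommGroup E] [NormedSpace ℝ E] {μ : Measure α} {f : α → E} {S B : Set α}
    {K σ : ℝ} (hS : μ S < ⊤) (hB : MeasurableSet B) (hf : IntegrableOn f S μ)
    (hK : ∀ x ∈ S, ‖f x‖ ≤ K) (hσ : ∀ x ∈ S \ B, ‖f x‖ ≤ σ) (hσ0 : 0 ≤ σ) :
    ‖∫ x in S, f x ∂μ‖ ≤ σ * μ.real S + K * μ.real (S ∩ B) := by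
  rw [← integral_inter_add_sdiff hB hf]
  have hinter := norm_setIntegral_le_of_norm_le_const (measure_inter_lt_top_of_left_ne_top hS.ne)
    fun x (hx : x ∈ S ∩ B) => hK x hx.1
  have hdiff :=
    norm_setIntegral_le_of_norm_le_const ((measure_mono Set.sdiff_subset).trans_lt hS) hσ
  have hmono : μ.real (S \ B) ≤ μ.real S := measureReal_mono Set.sdiff_subset hS.ne
  calc _ ≤ K * μ.real (S ∩ B) + σ * μ.real (S \ B) :=
        (norm_add_le _ _).trans (add_le_add hinter hdiff)
    _ ≤ σ * μ.real S + K * μ.real (S ∩ B) := by nlinarith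

lemma cell_eq_preimage_Icc (d : ℕ) (η : ℝ) (γ : Fin d → ℤ) :
    cell d η γ = WithLp.ofLp ⁻¹' Set.Icc (fun i => η * γ i) (fun i => η * γ i + η) := by
  ext x
  simp only [cell, Set.mem_ofPred_eq, Set.mem_preimage, Set.mem_Icc, Pi.le_def, forall_and]

lemma volume_cell (d : ℕ) {η : ℝ} (hη : 0 ≤ η) (γ : Fin d → ℤ) :
    volume (cell d η γ) = ENNReal.ofReal (η ^ d) := by
  rw [cell_eq_preimage_Icc, (PiLp.volume_preserving_ofLp (Fin d)).measure_preimage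
    measurableSet_Icc.nullMeasurableSet, Real.volume_Icc_pi]
  simp [ENNReal.ofReal_pow hη]

lemma volume_real_cell (d : ℕ) {η : ℝ} (hη : 0 ≤ η) (γ : Fin d → ℤ) :
    volume.real (cell d η γ) = η ^ d := by
  rw [measureReal_def, volume_cell d hη γ, ENNReal.toReal_ofReal (pow_nonneg hη d)]

lemma volume_ball_zero_le (d : ℕ) {r : ℝ} (hr : 0 < r) :
    volume (Metric.ball (0 : Ed d) r) ≤ ENNReal.ofReal ((2 * r) ^ d) := by
  have hsub : Metric.ball (0 : Ed d) r ⊆ WithLp.ofLp ⁻¹' Metric.ball 0 r := by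
    intro x hx
    simp only [Set.mem_preimage, mem_ball_zero_iff] at hx ⊢
    exact lt_of_le_of_lt ((pi_norm_le_iff_of_nonneg (norm_nonneg x)).2 (PiLp.norm_apply_le x)) hx
  calc _ ≤ volume (WithLp.ofLp ⁻¹' Metric.ball (0 : Fin d → ℝ) r) := measure_mono hsub
    _ = _ := by
      rw [(PiLp.volume_preserving_ofLp (Fin d)).measure_preimage
        measurableSet_ball.nullMeasurableSet, Real.volume_pi_ball _ hr, Fintype.card_fin]

lemma min_one_mul_le {c t : ℝ} (hc : 1 ≤ c) : min 1 (c * t) ≤ c * min 1 t := by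
  rcases le_total 1 t with h | h
  · rw [min_eq_left h]; exact (min_le_left _ _).trans (by linarith)
  · rw [min_eq_right h]; exact min_le_right _ _

lemma volume_real_cell_inter_ball_le (d : ℕ) {η r : ℝ} (hη : 0 < η) (hr : 0 < r)
    (γ : Fin d → ℤ) :
    volume.real (cell d η γ ∩ Metric.ball 0 r) ≤ η ^ d * (2 ^ d * min 1 ((r / η) ^ d)) := by
  have hcell : volume.real (cell d η γ ∩ Metric.ball 0 r) ≤ η ^ d :=
    (measureReal_mono Set.inter_subset_left (by simp [volume_cell d hη.le γ])).trans_eq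
      (volume_real_cell d hη.le γ)
  have hball : volume.real (cell d η γ ∩ Metric.ball 0 r) ≤ (2 * r) ^ d :=
    ENNReal.toReal_le_of_le_ofReal (by positivity)
      ((measure_mono Set.inter_subset_right).trans (volume_ball_zero_le d hr))
  calc _ ≤ min (η ^ d) ((2 * r) ^ d) := le_min hcell hball
    _ = η ^ d * min 1 (2 ^ d * (r / η) ^ d) := by
      rw [mul_min_of_nonneg _ _ (by positivity), mul_one, div_pow, mul_pow]
      field_simp
    _ ≤ η ^ d * (2 ^ d * min 1 ((r / η) ^ d)) := by
      gcongr
      exact min_one_mul_le (one_le_pow₀ one_le_two)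

theorem stmt_12_general (d : ℕ) :
    ∃ C : ℝ, 0 < C ∧
      ∀ (n : ℕ), 1 ≤ n →
      ∀ (M σ R : ℝ), 0 ≤ M → 0 ≤ σ → 0 < R →
      ∀ (V : Ed d → Ed d → Matrix (Fin n) (Fin n) ℂ)
        (V₀ : Ed d → Matrix (Fin n) (Fin n) ℂ),
        (∀ p q, Measurable fun xy : Ed d × Ed d => V xy.1 xy.2 p q) →
        (∀ p q, Measurable fun x => V₀ x p q) →
        (∀ x ξ : Ed d, frob (V x ξ) ≤ M) →
        (∀ x : Ed d, frob (V₀ x) ≤ M) →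
        (∀ x ξ : Ed d, R ≤ ‖ξ‖ → frob (V x ξ - V₀ x) ≤ σ) →
      ∀ (ε η : ℝ), 0 < ε → 0 < η →
      ∀ γ : Fin d → ℤ,
        frob (fun p q => ((η : ℂ) ^ d)⁻¹ *
            ∫ x in cell d η γ, (V x (ε⁻¹ • x) p q - V₀ x p q))
          ≤ σ + C * M * min 1 ((ε * R / η) ^ d) := by
  refine ⟨2 ^ (d + 1), by positivity, ?_⟩
  intro n _ M σ R hM hσ hR V V₀ hV hV₀ hVM hV₀M hstab ε η hε hη γ
  set S := cell d η γ
  set f : Ed d → EuclideanSpace ℂ (Fin n × Fin n) := fun x => entryVec (V x (ε⁻¹ • x) - V₀ x)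
  have hS : volume S < ⊤ := by simp [S, volume_cell d hη.le γ]
  have hf_bound : ∀ x, ‖f x‖ ≤ 2 * M := fun x => by
    rw [← frob_eq_norm_entryVec, two_mul]
    exact (frob_sub_le _ _).trans (add_le_add (hVM _ _) (hV₀M _))
  have hf_far : ∀ x ∈ S \ Metric.ball 0 (ε * R), ‖f x‖ ≤ σ := fun x hx => by
    rw [← frob_eq_norm_entryVec]
    refine hstab _ _ ?_
    rw [norm_smul, norm_inv, Real.norm_of_nonneg hε.le, le_inv_mul_iff₀ hε]
    simpa using hx.2
  have hf_int : IntegrableOn f S := by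
    refine Measure.integrableOn_of_bounded hS.ne ?_ (Filter.Eventually.of_forall hf_bound)
    refine (stronglyMeasurable_entryVec fun p q => ?_).aestronglyMeasurable
    exact ((hV p q).comp (measurable_id.prodMk (measurable_const_smul ε⁻¹))).sub (hV₀ p q)
  have hI := norm_setIntegral_le_of_norm_le_off hS measurableSet_ball hf_int
    (fun x _ => hf_bound x) hf_far hσ
  have hvol := volume_real_cell_inter_ball_le d hη (mul_pos hε hR) γ
  refine (frob_const_mul_integral (F := fun x => V x (ε⁻¹ • x) - V₀ x) _ hf_int).trans_le ?_
  rw [volume_real_cell d hη.le γ] at hI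
  rw [norm_inv, norm_pow, Complex.norm_real, Real.norm_of_nonneg hη.le,
    inv_mul_le_iff₀ (by positivity)]
  calc _ ≤ σ * η ^ d + 2 * M * volume.real (S ∩ Metric.ball 0 (ε * R)) := hI
    _ ≤ σ * η ^ d + 2 * M * (η ^ d * (2 ^ d * min 1 ((ε * R / η) ^ d))) := by gcongr
    _ = _ := by ring

/-- Cell-average estimate (5.13)–(5.14) of the stabilizing-oscillations
example (Section 3.3): if `|V(x,ξ) − V⁰(x)| ≤ σ` for `|ξ| ≥ R`, then the cell average
of `V(x, x/ε) − V⁰(x)` over `□_γ^η` is at most `σ + C M min(1, (εR/η)^d)`,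
with `C` depending only on `d`. -/
theorem stmt_12 (d : ℕ) (hd : 1 ≤ d) :
    ∃ C : ℝ, 0 < C ∧
      ∀ (n : ℕ), 1 ≤ n →
      ∀ (M σ R : ℝ), 0 ≤ M → 0 ≤ σ → 0 < R →
      ∀ (V : Ed d → Ed d → Matrix (Fin n) (Fin n) ℂ)
        (V₀ : Ed d → Matrix (Fin n) (Fin n) ℂ),
        (∀ p q, Measurable fun xy : Ed d × Ed d => V xy.1 xy.2 p q) →
        (∀ p q, Measurable fun x => V₀ x p q) →
        (∀ x ξ : Ed d, frob (V x ξ) ≤ M) →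
        (∀ x : Ed d, frob (V₀ x) ≤ M) →
        (∀ x ξ : Ed d, R ≤ ‖ξ‖ → frob (V x ξ - V₀ x) ≤ σ) →
      ∀ (ε η : ℝ), 0 < ε → 0 < η →
      ∀ γ : Fin d → ℤ,
        frob (fun p q => ((η : ℂ) ^ d)⁻¹ *
            ∫ x in cell d η γ, (V x (ε⁻¹ • x) p q - V₀ x p q))
          ≤ σ + C * M * min 1 ((ε * R / η) ^ d) :=
  stmt_12_general d

end
end

section
/- Let d ≥ 1, K, K₁, K₂ ≥ 0. Let W : ℝ^d → ℂ be twice continuously differentiable with |∂W/∂ξ_j (ξ)| ≤ K for all ξ ∈ ℝ^d and all j. Let φ : ℝ^d → ℝ^d be continuously differentiable, and let Φ : ℝ^d → M_d(ℝ) be a continuously differentiable matrix-valued function such that Φ(x) · Dφ(x) = I_d for all x (Dφ(x) being the Jacobian matrix of φ), with |Φ_{ij}(x)| ≤ K₁ and |∂Φ_{ij}/∂x_i (x)| ≤ K₂ for all x and all i, j. Then there exists a constant C > 0, depending only on d, such that for every η > 0, every ε > 0 and every γ ∈ ℤ^d: | ∫_{□_γ^η} (ΔW)(φ(x)/ε)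 dx | ≤ C K ε ( K₁ η^{d−1} + K₂ η^d ), where ΔW := Σ_{j=1}^d ∂²W/∂ξ_j². -/
open MeasureTheory

noncomputable section

/-- Partial derivative of a scalar function in the `j`-th coordinate direction. -/
def pdC {d : ℕ} (W : Ed d → ℂ) (j : Fin d) (ξ : Ed d) : ℂ :=
  fderiv ℝ W ξ (EuclideanSpace.single j 1)

/-- Partial derivative of a real-valued function in the `i`-th coordinate direction. -/
def pdR {d : ℕ} (g : Ed d → ℝ) (i : Fin d) (x : Ed d) : ℝ :=
  fderiv ℝ g x (EuclideanSpace.single i 1)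

/-- The Laplacian `ΔW = Σ_j ∂²W/∂ξ_j²`. -/
def lapl {d : ℕ} (W : Ed d → ℂ) (ξ : Ed d) : ℂ :=
  ∑ j, fderiv ℝ (fun y => pdC W j y) ξ (EuclideanSpace.single j 1)

/-!
Because `Φ(x)` inverts `Dφ(x)`, the chain rule rewrites the integrand as
`(ΔW)(φ/ε) = ε Σ_{i,j} Φ_{ij} ∂_i[(∂_j W)(φ/ε)]`. On the cube the product rule moves `∂_i`
onto the whole product `Φ_{ij} (∂_j W)(φ/ε)`, whose integral the divergence theorem turns into a
difference of two face integrals, each of size at most `K₁ K η^{d-1}`; what is left over,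
`(∂_i Φ_{ij}) (∂_j W)(φ/ε)`, integrates to at most `K₂ K η^d`.
-/

open Set

section Cube

variable {ι : Type*} [Fintype ι] {E : Type*} [NormedAddCommGroup E] [NormedSpace ℝ E]

lemma measureReal_Icc_add_const (a : ι → ℝ) {η : ℝ} (hη : 0 ≤ η) :
    volume.real (Icc a fun i => a i + η) = η ^ Fintype.card ι := by
  rw [measureReal_def, Real.volume_Icc_pi_toReal fun i => le_add_of_nonneg_right hη]
  simp

lemma norm_setIntegral_Icc_add_const_le (f : (ι → ℝ) → E) (a : ι → ℝ) {M η : ℝ}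
    (hη : 0 ≤ η) (hf : ∀ x, ‖f x‖ ≤ M) :
    ‖∫ x in Icc a (fun i => a i + η), f x‖ ≤ M * η ^ Fintype.card ι := by
  rw [← measureReal_Icc_add_const a hη]
  exact norm_setIntegral_le_of_norm_le_const isCompact_Icc.measure_lt_top fun x _ => hf x

end Cube

section Box

variable {n : ℕ} {E : Type*} [NormedAddCommGroup E] [NormedSpace ℝ E]

theorem integral_Icc_fderiv_single_eq (h : (Fin (n + 1) → ℝ) → E) (hh : ContDiff ℝ 1 h)
    {a b : Fin (n + 1) → ℝ} (hab : a ≤ b) (i : Fin (n + 1)) :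
    ∫ x in Icc a b, fderiv ℝ h x (Pi.single i 1) =
      (∫ x in Icc (a ∘ i.succAbove) (b ∘ i.succAbove), h (i.insertNth (b i) x)) -
        ∫ x in Icc (a ∘ i.succAbove) (b ∘ i.succAbove), h (i.insertNth (a i) x) := by
  have hsum : ∀ x, ∑ j, (Pi.single i (fderiv ℝ h) : Fin (n + 1) → _) j x (Pi.single j 1)
      = fderiv ℝ h x (Pi.single i 1) := fun x => by
    rw [Fintype.sum_eq_single i fun j hj => by simp [hj]]
    simp
  have key := integral_divergence_of_hasFDerivAt_off_countable' a b hab (Pi.single i h)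
    (Pi.single i (fderiv ℝ h)) ∅ countable_empty
    (fun j => by
      rcases eq_or_ne j i with rfl | hj
      · simpa using hh.continuous.continuousOn
      · simpa [hj] using (continuous_zero : Continuous (0 : (Fin (n + 1) → ℝ) → E)).continuousOn)
    (fun x _ j => by
      rcases eq_or_ne j i with rfl | hj
      · simpa using (hh.differentiable one_ne_zero x).hasFDerivAt
      · simpa [hj] using hasFDerivAt_zero (𝕜 := ℝ) (F := E) x)
    (by
      simp only [hsum]
      exact ((hh.continuous_fderiv one_ne_zero).clm_apply continuous_const).continuousOn
        |>.integrableOn_compact isCompact_Icc)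
  simp only [hsum] at key
  rw [key, Fintype.sum_eq_single i fun j hj => by simp [hj]]
  simp

theorem norm_setIntegral_Icc_fderiv_single_le (h : (Fin (n + 1) → ℝ) → E)
    (hh : ContDiff ℝ 1 h) {M η : ℝ} (hη : 0 ≤ η) (hM : ∀ x, ‖h x‖ ≤ M)
    (a : Fin (n + 1) → ℝ) (i : Fin (n + 1)) :
    ‖∫ x in Icc a (fun j => a j + η), fderiv ℝ h x (Pi.single i 1)‖ ≤ 2 * M * η ^ n := by
  rw [integral_Icc_fderiv_single_eq h hh (fun j => le_add_of_nonneg_right hη) i]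
  have hface : ∀ c, ‖∫ x in Icc (a ∘ i.succAbove) (fun j => a (i.succAbove j) + η),
      h (i.insertNth c x)‖ ≤ M * η ^ n := fun c => by
    simpa using norm_setIntegral_Icc_add_const_le _ (a ∘ i.succAbove) hη fun x => hM _
  calc _ ≤ M * η ^ n + M * η ^ n := (norm_sub_le _ _).trans (add_le_add (hface _) (hface _))
    _ = 2 * M * η ^ n := by ring

theorem norm_setIntegral_Icc_smul_fderiv_single_le (Q : (Fin (n + 1) → ℝ) → ℝ)
    (G : (Fin (n + 1) → ℝ) → E) (hQ : ContDiff ℝ 1 Q) (hG : ContDiff ℝ 1 G) {A B M η : ℝ}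
    (hη : 0 ≤ η) (i : Fin (n + 1)) (hQA : ∀ x, |Q x| ≤ A)
    (hQB : ∀ x, |fderiv ℝ Q x (Pi.single i 1)| ≤ B) (hGM : ∀ x, ‖G x‖ ≤ M)
    (a : Fin (n + 1) → ℝ) :
    ‖∫ x in Icc a (fun j => a j + η), Q x • fderiv ℝ G x (Pi.single i 1)‖
      ≤ 2 * (A * M) * η ^ n + B * M * η ^ (n + 1) := by
  have hQG : ContDiff ℝ 1 fun x => Q x • G x := hQ.smul hG
  have hprod : ∀ x, Q x • fderiv ℝ G x (Pi.single i 1) =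
      fderiv ℝ (fun x => Q x • G x) x (Pi.single i 1) - fderiv ℝ Q x (Pi.single i 1) • G x :=
    fun x => by
      rw [fderiv_fun_smul ((hQ.differentiable one_ne_zero) x) ((hG.differentiable one_ne_zero) x)]
      simp
  have hint : ∀ {f : (Fin (n + 1) → ℝ) → E}, Continuous f →
      IntegrableOn f (Icc a fun j => a j + η) := fun hf =>
    hf.continuousOn.integrableOn_compact isCompact_Icc
  have hdQ : Continuous fun x => fderiv ℝ Q x (Pi.single i 1) :=
    (hQ.continuous_fderiv one_ne_zero).clm_apply continuous_const
  have hdQG : Continuous fun x => fderiv ℝ (fun x => Q x • G x) x (Pi.single i 1) :=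
    (hQG.continuous_fderiv one_ne_zero).clm_apply continuous_const
  simp only [hprod]
  rw [integral_sub (hint hdQG) (hint (hdQ.fun_smul hG.continuous))]
  refine (norm_sub_le _ _).trans (add_le_add ?_ ?_)
  · refine norm_setIntegral_Icc_fderiv_single_le _ hQG hη (fun x => ?_) a i
    rw [norm_smul]
    exact mul_le_mul (hQA x) (hGM x) (norm_nonneg _) ((abs_nonneg _).trans (hQA x))
  · simpa using norm_setIntegral_Icc_add_const_le _ a hη fun x => by
      rw [norm_smul]
      exact mul_le_mul (hQB x) (hGM x) (norm_nonneg _) ((abs_nonneg _).trans (hQB x))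

end Box

section Cell

variable {d : ℕ} {E : Type*} [NormedAddCommGroup E] [NormedSpace ℝ E]

lemma preimage_toLp_cell (η : ℝ) (γ : Fin d → ℤ) :
    WithLp.toLp 2 ⁻¹' cell d η γ = Icc (fun i => η * γ i) (fun i => η * γ i + η) := by
  ext y
  simp [cell, Pi.le_def, forall_and]

lemma isCompact_cell (η : ℝ) (γ : Fin d → ℤ) : IsCompact (cell d η γ) := by
  rw [← (WithLp.toLp_surjective 2).image_preimage (cell d η γ), preimage_toLp_cell]
  exact isCompact_Icc.image (PiLp.continuous_toLp 2 _)

lemma setIntegral_cell_eq (u : Ed d → E) (η : ℝ) (γ : Fin d → ℤ) :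
    ∫ x in cell d η γ, u x =
      ∫ y in Icc (fun i => η * γ i) (fun i => η * γ i + η), u (WithLp.toLp 2 y) := by
  rw [← preimage_toLp_cell]
  exact ((PiLp.volume_preserving_toLp (Fin d)).setIntegral_preimage_emb
    (MeasurableEquiv.toLp 2 (Fin d → ℝ)).measurableEmbedding u _).symm

lemma fderiv_comp_toLp_apply_single (f : Ed d → E) (y : Fin d → ℝ) (i : Fin d) :
    fderiv ℝ (fun y => f (WithLp.toLp 2 y)) y (Pi.single i 1) =
      fderiv ℝ f (WithLp.toLp 2 y) (EuclideanSpace.single i 1) := by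
  have := (PiLp.continuousLinearEquiv 2 ℝ fun _ : Fin d => ℝ).symm.comp_right_fderiv
    (f := f) (x := y)
  exact congr($this (Pi.single i 1))

theorem norm_setIntegral_cell_smul_fderiv_single_le {n : ℕ} (Q : Ed (n + 1) → ℝ)
    (G : Ed (n + 1) → E) (hQ : ContDiff ℝ 1 Q) (hG : ContDiff ℝ 1 G) {A B M η : ℝ}
    (hη : 0 ≤ η) (i : Fin (n + 1)) (hQA : ∀ x, |Q x| ≤ A) (hQB : ∀ x, |pdR Q i x| ≤ B)
    (hGM : ∀ x, ‖G x‖ ≤ M) (γ : Fin (n + 1) → ℤ) :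
    ‖∫ x in cell (n + 1) η γ, Q x • fderiv ℝ G x (EuclideanSpace.single i 1)‖
      ≤ 2 * (A * M) * η ^ n + B * M * η ^ (n + 1) := by
  have htoLp : ContDiff ℝ 1 (WithLp.toLp 2 : (Fin (n + 1) → ℝ) → Ed (n + 1)) :=
    (PiLp.continuousLinearEquiv 2 ℝ fun _ : Fin (n + 1) => ℝ).symm.contDiff
  rw [setIntegral_cell_eq]
  simpa only [fderiv_comp_toLp_apply_single] using
    norm_setIntegral_Icc_smul_fderiv_single_le (fun y => Q (WithLp.toLp 2 y))
      (fun y => G (WithLp.toLp 2 y)) (hQ.comp htoLp) (hG.comp htoLp) hη i (fun y => hQA _)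
      (fun y => by rw [fderiv_comp_toLp_apply_single]; exact hQB _) (fun y => hGM _) _

end Cell

section Laplacian

theorem sum_smul_apply_single_eq_single {ι : Type*} [Fintype ι] [DecidableEq ι]
    (L : EuclideanSpace ℝ ι →L[ℝ] EuclideanSpace ℝ ι) (A : ι → ι → ℝ)
    (hA : ∀ i j, ∑ k, A i k * L (EuclideanSpace.single j 1) k = if i = j then 1 else 0)
    (j : ι) :
    ∑ i, A i j • L (EuclideanSpace.single i 1) = EuclideanSpace.single j 1 := by
  have hAL : Matrix.of A * Matrix.of (fun k i => L (EuclideanSpace.single i 1) k) = 1 := by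
    ext i j
    simpa [Matrix.mul_apply, Matrix.one_apply] using hA i j
  have hLA : Matrix.of (fun k i => L (EuclideanSpace.single i 1) k) * Matrix.of A = 1 :=
    mul_eq_one_comm.mp hAL
  ext k
  simpa [Matrix.mul_apply, Matrix.one_apply, mul_comm, eq_comm] using congr_fun (congr_fun hLA k) j

variable {d : ℕ}

theorem contDiff_pdC {m n : WithTop ℕ∞} {W : Ed d → ℂ} (hW : ContDiff ℝ n W) (hmn : m + 1 ≤ n)
    (j : Fin d) : ContDiff ℝ m (pdC W j) :=
  (hW.fderiv_right hmn).clm_apply contDiff_const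

theorem lapl_comp_eq {W : Ed d → ℂ} (hW : ContDiff ℝ 2 W) {ψ : Ed d → Ed d} {x : Ed d}
    (hψ : DifferentiableAt ℝ ψ x) (A : Fin d → Fin d → ℝ)
    (hA : ∀ i j, ∑ k, A i k * fderiv ℝ ψ x (EuclideanSpace.single j 1) k
      = if i = j then 1 else 0) :
    lapl W (ψ x) =
      ∑ j, ∑ i, A i j • fderiv ℝ (fun y => pdC W j (ψ y)) x (EuclideanSpace.single i 1) := by
  refine Finset.sum_congr rfl fun j _ => ?_
  have hpdC : DifferentiableAt ℝ (pdC W j) (ψ x) :=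
    ((contDiff_pdC hW (by norm_num) j).differentiable one_ne_zero) _
  rw [fderiv_fun_comp x hpdC hψ, ← sum_smul_apply_single_eq_single _ A hA j, map_sum]
  simp

theorem lapl_smul_comp_eq {W : Ed d → ℂ} (hW : ContDiff ℝ 2 W) {φ : Ed d → Ed d} {x : Ed d}
    (hφ : DifferentiableAt ℝ φ x) (Φ : Fin d → Fin d → ℝ)
    (hΦ : ∀ i j, ∑ k, Φ i k * fderiv ℝ φ x (EuclideanSpace.single j 1) k
      = if i = j then 1 else 0) {ε : ℝ} (hε : ε ≠ 0) :
    lapl W (ε⁻¹ • φ x) = ε • ∑ j, ∑ i,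
      Φ i j • fderiv ℝ (fun y => pdC W j (ε⁻¹ • φ y)) x (EuclideanSpace.single i 1) := by
  rw [lapl_comp_eq hW (ψ := fun y => ε⁻¹ • φ y) (hφ.const_smul ε⁻¹) (fun i j => ε * Φ i j)
    fun i j => ?_]
  · simp only [Finset.smul_sum, mul_smul]
  · rw [fderiv_fun_const_smul hφ, ← hΦ i j]
    refine Finset.sum_congr rfl fun k _ => ?_
    simp only [FunLike.coe_smul, Pi.smul_apply, PiLp.smul_apply, smul_eq_mul]
    field_simp

theorem setIntegral_cell_lapl_smul_comp_eq {W : Ed d → ℂ} (hW : ContDiff ℝ 2 W)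
    {φ : Ed d → Ed d} (hφ : ContDiff ℝ 1 φ) {Φ : Ed d → Fin d → Fin d → ℝ}
    (hΦ : ∀ i j, Continuous fun x => Φ x i j)
    (hinv : ∀ x i j, ∑ k, Φ x i k * fderiv ℝ φ x (EuclideanSpace.single j 1) k
      = if i = j then 1 else 0) {ε : ℝ} (hε : ε ≠ 0) (η : ℝ) (γ : Fin d → ℤ) :
    ∫ x in cell d η γ, lapl W (ε⁻¹ • φ x) = ε • ∑ j, ∑ i, ∫ x in cell d η γ,
      Φ x i j • fderiv ℝ (fun y => pdC W j (ε⁻¹ • φ y)) x (EuclideanSpace.single i 1) := by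
  have hint (j i) : IntegrableOn (fun x => Φ x i j •
      fderiv ℝ (fun y => pdC W j (ε⁻¹ • φ y)) x (EuclideanSpace.single i 1)) (cell d η γ) :=
    have hg : ContDiff ℝ 1 fun y => pdC W j (ε⁻¹ • φ y) :=
      (contDiff_pdC hW (by norm_num) j).comp (hφ.const_smul ε⁻¹)
    ((hΦ i j).smul ((hg.continuous_fderiv one_ne_zero).clm_apply
      continuous_const)).continuousOn.integrableOn_compact (isCompact_cell η γ)
  simp_rw [lapl_smul_comp_eq hW ((hφ.differentiable one_ne_zero) _) _ (hinv _) hε]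
  rw [integral_smul, integral_finsetSum _ fun j _ => integrable_finsetSum _ fun i _ => hint j i]
  simp_rw [integral_finsetSum _ fun i _ => hint _ i]

end Laplacian

theorem stmt_15_general (d : ℕ) :
    ∃ C : ℝ, 0 < C ∧
      ∀ (K K₁ K₂ : ℝ), 0 ≤ K → 0 ≤ K₁ → 0 ≤ K₂ →
      ∀ (W : Ed d → ℂ), ContDiff ℝ 2 W →
        (∀ (ξ : Ed d) (j : Fin d), ‖pdC W j ξ‖ ≤ K) →
      ∀ (φ : Ed d → Ed d), ContDiff ℝ 1 φ →
      ∀ (Φ : Ed d → Fin d → Fin d → ℝ),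
        (∀ i j, ContDiff ℝ 1 fun x => Φ x i j) →
        (∀ (x : Ed d) (i j : Fin d),
          ∑ k, Φ x i k * fderiv ℝ φ x (EuclideanSpace.single j 1) k
            = if i = j then 1 else 0) →
        (∀ (x : Ed d) (i j : Fin d), |Φ x i j| ≤ K₁) →
        (∀ (x : Ed d) (i j : Fin d), |pdR (fun y => Φ y i j) i x| ≤ K₂) →
      ∀ (η ε : ℝ), 0 < η → 0 < ε →
      ∀ γ : Fin d → ℤ,
        ‖∫ x in cell d η γ, lapl W (ε⁻¹ • φ x)‖
          ≤ C * K * ε * (K₁ * η ^ (d - 1) + K₂ * η ^ d) := by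
  rcases d with _ | n
  · refine ⟨1, one_pos, fun K K₁ K₂ hK hK₁ hK₂ W _ _ φ _ Φ _ _ _ _ η ε hη hε γ => ?_⟩
    simp only [lapl, Finset.univ_eq_empty, Finset.sum_empty, integral_zero, norm_zero]
    positivity
  refine ⟨2 * (n + 1) ^ 2, by positivity, ?_⟩
  intro K K₁ K₂ hK _ hK₂ W hW hWK φ hφ Φ hΦ hinv hΦK₁ hΦK₂ η ε hη hε γ
  have hterm (j i) : ‖∫ x in cell (n + 1) η γ,
      Φ x i j • fderiv ℝ (fun y => pdC W j (ε⁻¹ • φ y)) x (EuclideanSpace.single i 1)‖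
        ≤ 2 * (K₁ * K) * η ^ n + K₂ * K * η ^ (n + 1) :=
    norm_setIntegral_cell_smul_fderiv_single_le _ _ (hΦ i j)
      ((contDiff_pdC hW (by norm_num) j).comp (hφ.const_smul ε⁻¹)) hη.le i
      (fun x => hΦK₁ x i j) (fun x => hΦK₂ x i j) (fun x => hWK _ j) γ
  rw [setIntegral_cell_lapl_smul_comp_eq hW hφ (fun i j => (hΦ i j).continuous) hinv hε.ne',
    norm_smul, Real.norm_of_nonneg hε.le, Nat.add_sub_cancel]
  calc ε * ‖∑ j, ∑ i, _‖
      ≤ ε * ∑ _j : Fin (n + 1), ∑ _i : Fin (n + 1),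
          (2 * (K₁ * K) * η ^ n + K₂ * K * η ^ (n + 1)) := by
        gcongr
        exact (norm_sum_le _ _).trans (Finset.sum_le_sum fun j _ =>
          (norm_sum_le _ _).trans (Finset.sum_le_sum fun i _ => hterm j i))
    _ = 2 * (n + 1) ^ 2 * K * ε * (K₁ * η ^ n + K₂ * η ^ (n + 1))
          - (n + 1) ^ 2 * K * ε * K₂ * η ^ (n + 1) := by
        simp only [Finset.sum_const, Finset.card_univ, Fintype.card_fin, nsmul_eq_mul]
        push_cast
        ring
    _ ≤ _ := sub_le_self _ (by positivity)

/-- Integration-by-parts estimate (5.43)–(5.44) of the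
modulated-periodicity example (Section 3.6): if `W` is `C²` with `|∂W/∂ξ_j| ≤ K`,
`φ` is `C¹` and `Φ` is a `C¹` pointwise left/right inverse of the Jacobian of `φ`
with `|Φ_{ij}| ≤ K₁` and `|∂Φ_{ij}/∂x_i| ≤ K₂`, then
`|∫_{□_γ^η} (ΔW)(φ(x)/ε) dx| ≤ C K ε (K₁ η^{d−1} + K₂ η^d)`, `C = C(d)`. -/
theorem stmt_15 (d : ℕ) (hd : 1 ≤ d) :
    ∃ C : ℝ, 0 < C ∧
      ∀ (K K₁ K₂ : ℝ), 0 ≤ K → 0 ≤ K₁ → 0 ≤ K₂ →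
      ∀ (W : Ed d → ℂ), ContDiff ℝ 2 W →
        (∀ (ξ : Ed d) (j : Fin d), ‖pdC W j ξ‖ ≤ K) →
      ∀ (φ : Ed d → Ed d), ContDiff ℝ 1 φ →
      ∀ (Φ : Ed d → Fin d → Fin d → ℝ),
        (∀ i j, ContDiff ℝ 1 fun x => Φ x i j) →
        (∀ (x : Ed d) (i j : Fin d),
          ∑ k, Φ x i k * fderiv ℝ φ x (EuclideanSpace.single j 1) k
            = if i = j then 1 else 0) →
        (∀ (x : Ed d) (i j : Fin d), |Φ x i j| ≤ K₁) →
        (∀ (x : Ed d) (i j : Fin d), |pdR (fun y => Φ y i j) i x| ≤ K₂) →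
      ∀ (η ε : ℝ), 0 < η → 0 < ε →
      ∀ γ : Fin d → ℤ,
        ‖∫ x in cell d η γ, lapl W (ε⁻¹ • φ x)‖
          ≤ C * K * ε * (K₁ * η ^ (d - 1) + K₂ * η ^ d) :=
  stmt_15_general d

end
end
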